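/- Let A be an n×n real matrix. If the rank of A equals the number of nonzero eigenvalues of A counted with algebraic multiplicity, and all the nonzero eigenvalues of A are pairwise distinct, then A is diagonalizable over the complex numbers. -/

import Mathlib

/-!
Let `B` be `A` viewed over `ℂ`; by the rank normal form it has the same rank as `A`. Write the
characteristic polynomial as `X ^ m * q`, where `q = ∏ (X - λ)` runs over the nonzero
eigenvalues. The rank hypothesis gives `dim ker B = n - rank B = m`, the dimension of the
generalized `0`-eigenspace, so the two spaces coincide. By Cayley–Hamilton, `q(B) v` is killed
by `B ^ m`, hence already by `B`, so `X * q` annihilates `B`. Since the nonzero eigenvalues are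
distinct, `X * q` is squarefree, so `B` is semisimple and therefore diagonalizable over the
algebraically closed field `ℂ`.
-/

open Polynomial Module Matrix

theorem Multiset.count_add_card_filter_ne {α : Type*} [DecidableEq α] (s : Multiset α) (a : α) :
    s.count a + card (s.filter (· ≠ a)) = card s := by
  conv_rhs => rw [← filter_add_not (· = a) s, card_add, filter_eq', card_replicate]

namespace Polynomial

theorem eq_X_pow_mul_prod_of_monic_of_splits {K : Type*} [Field K] [DecidableEq K]
    {p : K[X]} (hm : p.Monic) (hs : p.Splits) :
    p = X ^ p.roots.count 0 * ((p.roots.filter (· ≠ 0)).map (X - C ·)).prod := by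
  conv_lhs => rw [hs.eq_prod_roots_of_monic hm, ← Multiset.filter_add_not (· = 0) p.roots]
  rw [Multiset.map_add, Multiset.prod_add, Multiset.filter_eq']
  simp

theorem squarefree_multiset_prod_X_sub_C {K : Type*} [Field K] {s : Multiset K}
    (hs : s.Nodup) : Squarefree (s.map (X - C ·)).prod := by
  have hm : (s.map (X - C ·)).prod.Monic :=
    monic_multiset_prod_of_monic _ _ fun a _ => monic_X_sub_C a
  refine Separable.squarefree ((nodup_roots_iff_of_splits hm.ne_zero ?_).mp ?_)
  · refine Splits.multisetProd fun _ h => ?_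
    obtain ⟨a, -, rfl⟩ := Multiset.mem_map.mp h
    exact Splits.X_sub_C a
  · rwa [roots_multiset_prod_X_sub_C]

end Polynomial

namespace Matrix

variable {m : Type*} [Fintype m]

theorem rank_fromBlocks_one_zero_submatrix {K : Type*} [Field K] {r s : ℕ}
    (e : m ≃ Fin r ⊕ Fin s) :
    ((fromBlocks (1 : Matrix (Fin r) (Fin r) K) 0 0 0).submatrix e e).rank = r := by
  classical
  rw [rank_submatrix, ← diagonal_one, ← diagonal_zero, fromBlocks_diagonal, rank_diagonal,
    Fintype.card_subtype, Finset.card_filter, Fintype.sum_sum_type]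
  simp

theorem rank_map_ringHom [DecidableEq m] {K L : Type*} [Field K] [Field L] (f : K →+* L)
    (M : Matrix m m K) : (M.map f).rank = M.rank := by
  obtain ⟨V, U, e, hV, hU, hM⟩ := exists_rank_normal_form M
  have hML : V.map f * M.map f * U.map f =
      (fromBlocks (1 : Matrix (Fin M.rank) (Fin M.rank) L) 0 0 0).submatrix e e := by
    simpa [Matrix.map_mul, ← submatrix_map, fromBlocks_map] using congrArg (·.map f) hM
  have hVL := (isUnit_iff_isUnit_det _).mp (hV.map f.mapMatrix)
  have hUL := (isUnit_iff_isUnit_det _).mp (hU.map f.mapMatrix)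
  rw [← rank_mul_eq_right_of_isUnit_det _ _ hVL, ← rank_mul_eq_left_of_isUnit_det _ _ hUL]
  exact (congrArg rank hML).trans (rank_fromBlocks_one_zero_submatrix e)

end Matrix

namespace Module.End

variable {K V : Type*} [Field K] [AddCommGroup V] [Module K V] {f : End K V}

theorem ker_eq_maxGenEigenspace_zero_of_count_roots_le [DecidableEq K] [FiniteDimensional K V]
    (h : f.charpoly.roots.count 0 ≤ finrank K (LinearMap.ker f)) :
    LinearMap.ker f = f.maxGenEigenspace 0 := by
  refine Submodule.eq_of_le_of_finrank_le (fun x hx => ?_) ?_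
  · exact (mem_maxGenEigenspace f 0 x).mpr ⟨1, by simpa using hx⟩
  · rwa [LinearMap.finrank_maxGenEigenspace_zero_eq, ← rootMultiplicity_eq_natTrailingDegree',
      ← count_roots]

theorem aeval_X_mul_eq_zero_of_ker_eq_maxGenEigenspace_zero
    (hker : LinearMap.ker f = f.maxGenEigenspace 0) {k : ℕ} {q : K[X]}
    (hq : aeval f (X ^ k * q) = 0) : aeval f (X * q) = 0 := by
  ext v
  have hv : aeval f q v ∈ f.maxGenEigenspace 0 := by
    refine (mem_maxGenEigenspace f 0 _).mpr ⟨k, ?_⟩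
    simpa [← Module.End.mul_apply] using LinearMap.congr_fun hq v
  rw [← hker] at hv
  simpa using hv

theorem isSemisimple_of_count_roots_le_of_nodup [DecidableEq K] [FiniteDimensional K V]
    (hs : f.charpoly.Splits)
    (hker : f.charpoly.roots.count 0 ≤ finrank K (LinearMap.ker f))
    (hnodup : (f.charpoly.roots.filter (· ≠ 0)).Nodup) : f.IsSemisimple := by
  set q := ((f.charpoly.roots.filter (· ≠ 0)).map (X - C ·)).prod
  have hXq : X * q = ((0 ::ₘ f.charpoly.roots.filter (· ≠ 0)).map (X - C ·)).prod := by
    simp [q]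
  have hann : aeval f (X * q) = 0 := by
    refine aeval_X_mul_eq_zero_of_ker_eq_maxGenEigenspace_zero (k := f.charpoly.roots.count 0)
      (ker_eq_maxGenEigenspace_zero_of_count_roots_le hker) ?_
    rw [← eq_X_pow_mul_prod_of_monic_of_splits f.charpoly_monic hs, LinearMap.aeval_self_charpoly]
  refine isSemisimple_of_squarefree_aeval_eq_zero ?_ hann
  rw [hXq]
  exact squarefree_multiset_prod_X_sub_C (Multiset.nodup_cons.mpr ⟨by simp, hnodup⟩)

end Module.End

theorem LinearMap.isDiag_toMatrix_of_forall_mem_eigenspace {ι K V : Type*} [Fintype ι]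
    [DecidableEq ι] [Field K] [AddCommGroup V] [Module K V] (b : Basis ι K V) (f : End K V)
    (hb : ∀ i, ∃ μ, b i ∈ f.eigenspace μ) : (LinearMap.toMatrix b b f).IsDiag := by
  intro i j hij
  obtain ⟨μ, hμ⟩ := hb j
  rw [LinearMap.toMatrix_apply, Module.End.mem_eigenspace_iff.mp hμ, map_smul, b.repr_self]
  simp [Finsupp.single_eq_of_ne hij]

theorem Matrix.exists_isUnit_isDiag_of_isSemisimple {n K : Type*} [Fintype n] [DecidableEq n]
    [Field K] [IsAlgClosed K] {B : Matrix n n K} (hB : Module.End.IsSemisimple (toLin' B)) :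
    ∃ P : Matrix n n K, IsUnit P ∧ (P⁻¹ * B * P).IsDiag := by
  classical
  set f : End K (n → K) := toLin' B
  have hint : DirectSum.IsInternal f.eigenspace :=
    (DirectSum.isInternal_submodule_iff_iSupIndep_and_iSup_eq_top _).mpr
      ⟨End.eigenspaces_iSupIndep _, hB.iSup_eigenspace_eq_top⟩
  let b₀ := hint.collectedBasis fun μ => finBasis K (f.eigenspace μ)
  let b := b₀.reindex (b₀.indexEquiv (Pi.basisFun K n))
  have hb : ∀ i, ∃ μ, b i ∈ f.eigenspace μ := fun i =>
    ⟨_, by rw [Basis.reindex_apply]; exact hint.collectedBasis_mem _ _⟩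
  let P := (Pi.basisFun K n).toMatrix b
  have hP : P⁻¹ = b.toMatrix (Pi.basisFun K n) :=
    inv_eq_left_inv (b.toMatrix_mul_toMatrix_flip _)
  refine ⟨P, ?_, ?_⟩
  · have := (Pi.basisFun K n).invertibleToMatrix b
    exact isUnit_of_invertible P
  · rw [hP, ← LinearMap.toMatrix'_toLin' B, ← LinearMap.toMatrix_eq_toMatrix',
      basis_toMatrix_mul_linearMap_toMatrix_mul_basis_toMatrix]
    exact LinearMap.isDiag_toMatrix_of_forall_mem_eigenspace b _ hb

theorem Matrix.exists_isUnit_isDiag_of_rank_eq_card_roots_ne_zero {n K : Type*} [Fintype n]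
    [DecidableEq n] [Field K] [IsAlgClosed K] [DecidableEq K] {B : Matrix n n K}
    (hrank : B.rank = Multiset.card (B.charpoly.roots.filter (· ≠ 0)))
    (hnodup : (B.charpoly.roots.filter (· ≠ 0)).Nodup) :
    ∃ P : Matrix n n K, IsUnit P ∧ (P⁻¹ * B * P).IsDiag := by
  have hcard : B.charpoly.roots.count 0 + Multiset.card (B.charpoly.roots.filter (· ≠ 0)) =
      Fintype.card n := by
    rw [Multiset.count_add_card_filter_ne, ← charpoly_natDegree_eq_dim B,
      (IsAlgClosed.splits _).natDegree_eq_card_roots]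
  have hnullity : B.rank + finrank K (LinearMap.ker (toLin' B)) = Fintype.card n := by
    rw [Matrix.rank, ← toLin'_apply', LinearMap.finrank_range_add_finrank_ker,
      finrank_fintype_fun_eq_card]
  refine exists_isUnit_isDiag_of_isSemisimple ?_
  rw [← charpoly_toLin'] at hnodup
  exact Module.End.isSemisimple_of_count_roots_le_of_nodup (IsAlgClosed.splits _)
    (by rw [charpoly_toLin']; omega) hnodup

/-- If the rank of the real matrix A equals the number of nonzero eigenvalues of A
counted with algebraic multiplicity, and all the nonzero eigenvalues are pairwise
distinct, then A is diagonalizable over ℂ. -/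
theorem stmt_1 (n : ℕ) (A : Matrix (Fin n) (Fin n) ℝ)
    (hrank : A.rank =
      Multiset.card (((A.map Complex.ofReal).charpoly.roots).filter (· ≠ 0)))
    (hdistinct : (((A.map Complex.ofReal).charpoly.roots).filter (· ≠ 0)).Nodup) :
    ∃ P : Matrix (Fin n) (Fin n) ℂ, IsUnit P ∧
      (P⁻¹ * A.map Complex.ofReal * P).IsDiag :=
  exists_isUnit_isDiag_of_rank_eq_card_roots_ne_zero
    ((rank_map_ringHom Complex.ofRealHom A).trans hrank) hdistinct
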